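/- For ℓ ≥ max{k0min, k0max} (with k0max = min{A,B}), the value G(a,b,c,d,e,f,ℓ) is independent of ℓ: it equals max{0, k0max − k0min + 1}. In particular, the fusion coefficients N_{λ,μ}^{(ℓ)ν} given by the Bégin–Mathieu–Walton formula stabilize to the tensor product coefficient N_{λ,μ}^{ν} for all sufficiently large levels ℓ. -/

import Mathlib

/-- A from the Bégin–Mathieu–Walton formula. -/
def fusA (a b c d e f : ℚ) : ℚ := (2 * (a + c + f) + (b + d + e)) / 3

/-- B from the Bégin–Mathieu–Walton formula. -/
def fusB (a b c d e f : ℚ) : ℚ := ((a + c + f) + 2 * (b + d + e)) / 3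

/-- k0min from the Bégin–Mathieu–Walton formula. -/
def k0min (a b c d e f : ℚ) : ℚ :=
  max (a + b) (max (c + d) (max (e + f)
    (max (fusA a b c d e f - a) (max (fusA a b c d e f - c) (max (fusA a b c d e f - f)
    (max (fusB a b c d e f - b) (max (fusB a b c d e f - d) (fusB a b c d e f - e))))))))

/-- The Bégin–Mathieu–Walton closed formula G(a,b,c,d,e,f,ℓ) = max{0, min{A,B,ℓ} − k0min + 1}. -/
def fusG (a b c d e f ℓ : ℚ) : ℚ :=
  max 0 (min (fusA a b c d e f) (min (fusB a b c d e f) ℓ) - k0min a b c d e f + 1)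

theorem stmt_7_general (a b c d e f ℓ : ℚ)
    (hℓ : max (k0min a b c d e f) (min (fusA a b c d e f) (fusB a b c d e f)) ≤ ℓ) :
    fusG a b c d e f ℓ =
      max 0 (min (fusA a b c d e f) (fusB a b c d e f) - k0min a b c d e f + 1) := by
  rw [fusG, ← min_assoc, min_eq_left (le_of_max_le_right hℓ)]

/-- For ℓ ≥ max{k0min, k0max} the value of G is independent of ℓ:
it equals the tensor coefficient max{0, k0max − k0min + 1}. -/
theorem stmt_7 (a b c d e f ℓ : ℚ)
    (ha : 0 ≤ a) (hb : 0 ≤ b) (hc : 0 ≤ c) (hd : 0 ≤ d) (he : 0 ≤ e) (hf : 0 ≤ f)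
    (hℓ : max (k0min a b c d e f) (min (fusA a b c d e f) (fusB a b c d e f)) ≤ ℓ) :
    fusG a b c d e f ℓ =
      max 0 (min (fusA a b c d e f) (fusB a b c d e f) - k0min a b c d e f + 1) :=
  stmt_7_general a b c d e f ℓ hℓ
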